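/- Suppose that the individually optimal capacity C*_i ≥ 0 satisfies P(x_i ≤ C*_i) = γ and P(x_i ≥ C*_i) = π_s/π_δ, and that the grand-coalition optimal capacity C*_N ≥ 0 satisfies P(x_N ≥ C*_N) = π_s/π_δ, where x_N = Σ_{j∈N} x_j. Then the reduction in expected cost of participant i under the allocation ζ equals Φ(x_i) − ζ_i = π_s·(E[x_i | x_i ≥ C*_i] − E[x_i | x_N ≥ C*_N]). -/

import Mathlib

open MeasureTheory Finset

/-- Expected daily storage cost for demand `Z` and capacity `C`:
`G(Z, C) = πs·C + πh·E[(Z − C)⁺] + πl·E[min(C, Z)]`. -/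
noncomputable def expCost {Ω : Type*} [MeasurableSpace Ω] (μ : Measure Ω)
    (πh πl πs : ℝ) (Z : Ω → ℝ) (C : ℝ) : ℝ :=
  πs * C + πh * ∫ ω, max (Z ω - C) 0 ∂μ + πl * ∫ ω, min C (Z ω) ∂μ

/-- Minimal expected storage cost: `Φ(Z) = inf_{C ≥ 0} G(Z, C)`. -/
noncomputable def minExpCost {Ω : Type*} [MeasurableSpace Ω] (μ : Measure Ω)
    (πh πl πs : ℝ) (Z : Ω → ℝ) : ℝ :=
  sInf ((fun C => expCost μ πh πl πs Z C) '' Set.Ici (0 : ℝ))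

/-- Conditional expectation `E[Z ∣ A] = E[Z·1_A]/P(A)`. -/
noncomputable def condExpOn {Ω : Type*} [MeasurableSpace Ω] (μ : Measure Ω)
    (Z : Ω → ℝ) (A : Set Ω) : ℝ :=
  (∫ ω in A, Z ω ∂μ) / (μ A).toReal

/-- Allocation 2: `ζ_i = πl·E[x_i] + πs·E[x_i ∣ x_N ≥ C*_N]`. -/
noncomputable def zetaAlloc {Ω ι : Type*} [MeasurableSpace Ω] [Fintype ι]
    (μ : Measure Ω) (πl πs : ℝ) (x : ι → Ω → ℝ) (CstarN : ℝ) (i : ι) : ℝ :=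
  πl * ∫ ω, x i ω ∂μ
    + πs * condExpOn μ (x i) {ω | CstarN ≤ ∑ j, x j ω}

section Aux

variable {Ω : Type*} [MeasurableSpace Ω] (μ : Measure Ω) [IsProbabilityMeasure μ]

lemma expCost_eq_aux (πh πl πs : ℝ) (Z : Ω → ℝ) (hZ : Integrable Z μ) (C : ℝ) :
    expCost μ πh πl πs Z C
      = πs * C + πl * ∫ ω, Z ω ∂μ + (πh - πl) * ∫ ω, max (Z ω - C) 0 ∂μ := by
  have hmaxint : Integrable (fun ω => max (Z ω - C) 0) μ :=
    (hZ.sub (integrable_const C)).pos_part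
  have hmin : (fun ω => min C (Z ω)) = fun ω => Z ω - max (Z ω - C) 0 := by
    funext ω
    rcases le_total C (Z ω) with h | h
    · rw [min_eq_left h, max_eq_left (by linarith)]; ring
    · rw [min_eq_right h, max_eq_right (by linarith)]; ring
  rw [expCost, hmin, integral_sub hZ hmaxint]
  ring

lemma key_eq_aux (πs πδ : ℝ) (hπs : 0 < πs) (hπδ : 0 < πδ)
    (Z : Ω → ℝ) (hZm : Measurable Z) (hZ : Integrable Z μ) (C : ℝ)
    (htail : μ {ω | C ≤ Z ω} = ENNReal.ofReal (πs / πδ)) :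
    πs * C + πδ * ∫ ω, max (Z ω - C) 0 ∂μ
      = πs * condExpOn μ Z {ω | C ≤ Z ω} := by
  set A := {ω | C ≤ Z ω} with hAdef
  have hA : MeasurableSet A := measurableSet_le measurable_const hZm
  have hμA : (μ A).toReal = πs / πδ := by
    rw [htail, ENNReal.toReal_ofReal (by positivity)]
  have hmax : (fun ω => max (Z ω - C) 0) = A.indicator (fun ω => Z ω - C) := by
    funext ω
    by_cases h : ω ∈ A
    · rw [Set.indicator_of_mem h]
      exact max_eq_left (by simpa [hAdef, sub_nonneg] using h)
    · rw [Set.indicator_of_notMem h]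
      refine max_eq_right ?_
      have : ¬ C ≤ Z ω := h
      linarith [not_le.mp this]
  have h1 : ∫ ω, max (Z ω - C) 0 ∂μ = (∫ ω in A, Z ω ∂μ) - C * (πs / πδ) := by
    rw [hmax, integral_indicator hA, integral_sub hZ.restrict (integrable_const _),
        setIntegral_const, measureReal_def, hμA, smul_eq_mul]
    ring
  rw [h1, condExpOn, hμA]
  field_simp
  ring

lemma key_le_aux (πs πδ : ℝ) (hπs : 0 < πs) (hπδ : 0 < πδ)
    (Z : Ω → ℝ) (hZm : Measurable Z) (hZ : Integrable Z μ) (Cs C : ℝ)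
    (htail : μ {ω | Cs ≤ Z ω} = ENNReal.ofReal (πs / πδ)) :
    πs * Cs + πδ * ∫ ω, max (Z ω - Cs) 0 ∂μ
      ≤ πs * C + πδ * ∫ ω, max (Z ω - C) 0 ∂μ := by
  set A := {ω | Cs ≤ Z ω} with hAdef
  have hA : MeasurableSet A := measurableSet_le measurable_const hZm
  have hμA : (μ A).toReal = πs / πδ := by
    rw [htail, ENNReal.toReal_ofReal (by positivity)]
  have hint1 : Integrable (fun ω => max (Z ω - Cs) 0) μ :=
    (hZ.sub (integrable_const Cs)).pos_part
  have hint2 : Integrable (fun ω => max (Z ω - C) 0) μ :=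
    (hZ.sub (integrable_const C)).pos_part
  have hpt : ∀ ω, max (Z ω - Cs) 0 - max (Z ω - C) 0
      ≤ A.indicator (fun _ => C - Cs) ω := by
    intro ω
    by_cases h : ω ∈ A
    · rw [Set.indicator_of_mem h]
      have h1 : Cs ≤ Z ω := h
      have h2 := le_max_left (Z ω - C) 0
      rw [max_eq_left (by linarith : (0:ℝ) ≤ Z ω - Cs)]
      linarith
    · rw [Set.indicator_of_notMem h]
      have h1 : ¬ Cs ≤ Z ω := h
      have h1' := not_le.mp h1
      have h2 := le_max_right (Z ω - C) 0
      rw [max_eq_right (by linarith : Z ω - Cs ≤ 0)]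
      linarith
  have hmono : ∫ ω, (max (Z ω - Cs) 0 - max (Z ω - C) 0) ∂μ
      ≤ ∫ ω, A.indicator (fun _ => C - Cs) ω ∂μ :=
    integral_mono (hint1.sub hint2) ((integrable_const _).indicator hA) hpt
  rw [integral_sub hint1 hint2, integral_indicator hA, setIntegral_const, measureReal_def, hμA,
      smul_eq_mul] at hmono
  have h2 : πδ * (∫ ω, max (Z ω - Cs) 0 ∂μ - ∫ ω, max (Z ω - C) 0 ∂μ)
      ≤ πδ * (πs / πδ * (C - Cs)) := mul_le_mul_of_nonneg_left hmono hπδ.le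
  have h3 : πδ * (πs / πδ * (C - Cs)) = πs * (C - Cs) := by field_simp
  linarith

lemma minExpCost_eq_aux (πh πl πs : ℝ) (hprices : πl < πh)
    (hπs0 : 0 < πs) (hπs1 : πs < πh - πl)
    (Z : Ω → ℝ) (hZm : Measurable Z) (hZ : Integrable Z μ)
    (Cs : ℝ) (hCs0 : 0 ≤ Cs)
    (htail : μ {ω | Cs ≤ Z ω} = ENNReal.ofReal (πs / (πh - πl))) :
    minExpCost μ πh πl πs Z
      = πl * ∫ ω, Z ω ∂μ + πs * condExpOn μ Z {ω | Cs ≤ Z ω} := by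
  have hπδ : 0 < πh - πl := by linarith
  have hmin : minExpCost μ πh πl πs Z = expCost μ πh πl πs Z Cs := by
    refine IsLeast.csInf_eq ⟨⟨Cs, hCs0, rfl⟩, ?_⟩
    rintro _ ⟨C, hC, rfl⟩
    show expCost μ πh πl πs Z Cs ≤ expCost μ πh πl πs Z C
    rw [expCost_eq_aux μ πh πl πs Z hZ, expCost_eq_aux μ πh πl πs Z hZ]
    have := key_le_aux μ πs (πh - πl) hπs0 hπδ Z hZm hZ Cs C htail
    linarith
  rw [hmin, expCost_eq_aux μ πh πl πs Z hZ]
  have := key_eq_aux μ πs (πh - πl) hπs0 hπδ Z hZm hZ Cs htail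
  linarith

end Aux

/-- if the individually optimal capacity `C*_i ≥ 0` satisfies
`P(x_i ≤ C*_i) = γ` and `P(x_i ≥ C*_i) = πs/π_δ`, and the grand-coalition
optimal capacity `C*_N ≥ 0` satisfies `P(x_N ≥ C*_N) = πs/π_δ`, then the
reduction in expected cost of participant `i` under allocation `ζ` equals
`Φ(x_i) − ζ_i = πs·(E[x_i ∣ x_i ≥ C*_i] − E[x_i ∣ x_N ≥ C*_N])`. -/
theorem individual_expected_cost_reduction
    {Ω ι : Type*} [MeasurableSpace Ω] [Fintype ι]
    (μ : Measure Ω) [IsProbabilityMeasure μ]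
    (πh πl πs : ℝ) (hprices : πl < πh) (hπl : 0 ≤ πl)
    (hπs0 : 0 < πs) (hπs1 : πs < πh - πl)
    (x : ι → Ω → ℝ) (hxint : ∀ j, Integrable (x j) μ) (hx0 : ∀ j ω, 0 ≤ x j ω)
    (i : ι) (Cstari : ℝ) (hCstari0 : 0 ≤ Cstari)
    (hquantile : μ {ω | x i ω ≤ Cstari}
      = ENNReal.ofReal ((πh - πl - πs) / (πh - πl)))
    (htail : μ {ω | Cstari ≤ x i ω} = ENNReal.ofReal (πs / (πh - πl)))
    (CstarN : ℝ) (hCstarN0 : 0 ≤ CstarN)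
    (htailN : μ {ω | CstarN ≤ ∑ j, x j ω} = ENNReal.ofReal (πs / (πh - πl))) :
    minExpCost μ πh πl πs (x i) - zetaAlloc μ πl πs x CstarN i =
      πs * (condExpOn μ (x i) {ω | Cstari ≤ x i ω}
          - condExpOn μ (x i) {ω | CstarN ≤ ∑ j, x j ω}) := by
  -- replace `x i` by a measurable representative `y`
  obtain ⟨y, hym, hxy⟩ :
      ∃ y : Ω → ℝ, Measurable y ∧ x i =ᵐ[μ] y :=
    ⟨(hxint i).1.mk _, (hxint i).1.stronglyMeasurable_mk.measurable,
      (hxint i).1.ae_eq_mk⟩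
  have hyint : Integrable y μ := (hxint i).congr hxy
  have hAeq : {ω | Cstari ≤ x i ω} =ᵐ[μ] {ω | Cstari ≤ y ω} := by
    rw [Filter.eventuallyEq_set]
    filter_upwards [hxy] with ω hω
    simp [Set.mem_setOf_eq, hω]
  have htaily : μ {ω | Cstari ≤ y ω} = ENNReal.ofReal (πs / (πh - πl)) := by
    rw [← measure_congr hAeq, htail]
  -- minExpCost for x i equals minExpCost for y
  have hexp : (fun C => expCost μ πh πl πs (x i) C)
      = fun C => expCost μ πh πl πs y C := by
    funext C
    have h1 : ∫ ω, max (x i ω - C) 0 ∂μ = ∫ ω, max (y ω - C) 0 ∂μ :=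
      integral_congr_ae (by filter_upwards [hxy] with ω hω; rw [hω])
    have h2 : ∫ ω, min C (x i ω) ∂μ = ∫ ω, min C (y ω) ∂μ :=
      integral_congr_ae (by filter_upwards [hxy] with ω hω; rw [hω])
    unfold expCost
    rw [h1, h2]
  have hminxy : minExpCost μ πh πl πs (x i) = minExpCost μ πh πl πs y := by
    unfold minExpCost; rw [hexp]
  -- transfer condExpOn
  have hcond : condExpOn μ y {ω | Cstari ≤ y ω}
      = condExpOn μ (x i) {ω | Cstari ≤ x i ω} := by
    have hnum : ∫ ω in {ω | Cstari ≤ y ω}, y ω ∂μ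
        = ∫ ω in {ω | Cstari ≤ x i ω}, x i ω ∂μ := by
      rw [Measure.restrict_congr_set hAeq.symm]
      exact integral_congr_ae (ae_restrict_of_ae hxy.symm)
    unfold condExpOn
    rw [hnum, measure_congr hAeq.symm]
  have hEy : ∫ ω, y ω ∂μ = ∫ ω, x i ω ∂μ := integral_congr_ae hxy.symm
  have hmain := minExpCost_eq_aux μ πh πl πs hprices hπs0 hπs1 y hym hyint
    Cstari hCstari0 htaily
  rw [hminxy, hmain, hcond, hEy, zetaAlloc]
  ring
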